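/- Let K : ℝ² → ℝ be continuously differentiable on an open set U, and let ψ, s : (t₀, t₁) → ℝ be differentiable functions with (ψ(t), s(t)) ∈ U for all t, satisfying the classical curvature flow ODE: ψ'(t) = −K(ψ(t), s(t)) − s(t)·∂K/∂y(ψ(t), s(t)) and s'(t) = s(t)·∂K/∂x(ψ(t), s(t)). Then the quantity I(t) = s(t)·K(ψ(t), s(t)) is constant on (t₀, t₁). -/

import Mathlib

/-!
With `H(x, y) = y · K(x, y)` one has `∂H/∂x = y · ∂K/∂x` and `∂H/∂y = K + y · ∂K/∂y`, so the flow is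
Hamilton's system `ψ' = -∂H/∂y`, `s' = ∂H/∂x`. Along it
`dH/dt = ∂H/∂x · ψ' + ∂H/∂y · s' = 0`, and a function with zero derivative on an interval is constant.
-/

open Set

lemma ContinuousLinearMap.apply_prod_eq_smul_add_smul {R M : Type*} [Semiring R]
    [TopologicalSpace R] [AddCommMonoid M] [TopologicalSpace M] [Module R M]
    (L : R × R →L[R] M) (a b : R) :
    L (a, b) = a • L (1, 0) + b • L (0, 1) := by
  have hab : ((a, b) : R × R) = a • ((1 : R), (0 : R)) + b • ((0 : R), (1 : R)) := by simp
  rw [hab, map_add, map_smul, map_smul]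

lemma HasFDerivAt.hasDerivAt_comp_hamiltonian_flow {H : ℝ × ℝ → ℝ} {H' : ℝ × ℝ →L[ℝ] ℝ}
    {x y : ℝ → ℝ} {t : ℝ} (hH : HasFDerivAt H H' (x t, y t))
    (hx : HasDerivAt x (-H' (0, 1)) t) (hy : HasDerivAt y (H' (1, 0)) t) :
    HasDerivAt (fun t => H (x t, y t)) 0 t :=
  (hH.comp_hasDerivAt t (hx.prodMk hy)).congr_deriv <| by
    rw [H'.apply_prod_eq_smul_add_smul, smul_eq_mul, smul_eq_mul]
    ring

theorem classical_curvature_flow_ODE_conserved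
    (K : ℝ × ℝ → ℝ) (U : Set (ℝ × ℝ)) (hU : IsOpen U)
    (hK : ContDiffOn ℝ 1 K U)
    (t₀ t₁ : ℝ) (ψ s : ℝ → ℝ)
    (hψ : ∀ t ∈ Ioo t₀ t₁, DifferentiableAt ℝ ψ t)
    (hs : ∀ t ∈ Ioo t₀ t₁, DifferentiableAt ℝ s t)
    (hmem : ∀ t ∈ Ioo t₀ t₁, (ψ t, s t) ∈ U)
    (hode1 : ∀ t ∈ Ioo t₀ t₁,
      deriv ψ t = -K (ψ t, s t) - s t * fderiv ℝ K (ψ t, s t) (0, 1))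
    (hode2 : ∀ t ∈ Ioo t₀ t₁,
      deriv s t = s t * fderiv ℝ K (ψ t, s t) (1, 0)) :
    ∀ t ∈ Ioo t₀ t₁, ∀ t' ∈ Ioo t₀ t₁,
      s t * K (ψ t, s t) = s t' * K (ψ t', s t') := by
  have hI : ∀ t ∈ Ioo t₀ t₁, HasDerivAt (fun t => s t * K (ψ t, s t)) 0 t := by
    intro t ht
    have hKt : HasFDerivAt K (fderiv ℝ K (ψ t, s t)) (ψ t, s t) :=
      ((hK.differentiableOn one_ne_zero).differentiableAt
        (hU.mem_nhds (hmem t ht))).hasFDerivAt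
    refine (hasFDerivAt_snd.mul hKt).hasDerivAt_comp_hamiltonian_flow ?_ ?_
    · exact (hψ t ht).hasDerivAt.congr_deriv (by simp [hode1 t ht, sub_eq_add_neg])
    · exact (hs t ht).hasDerivAt.congr_deriv (by simp [hode2 t ht])
  intro t ht t' ht'
  exact isOpen_Ioo.is_const_of_deriv_eq_zero isPreconnected_Ioo
    (fun u hu => (hI u hu).differentiableAt.differentiableWithinAt)
    (fun u hu => (hI u hu).deriv) ht ht'
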